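/- There exists a constant c > 0 such that for every n and any two distinct vertices u, v ∈ [n], the critical Erdős–Rényi random graph G(n,1/n) satisfies P( C(u) = C(v) ) ≤ c n^{−1/3}, i.e. the probability that u and v lie in the same connected component is at most c n^{−1/3}. -/

import Mathlib

open MeasureTheory Filter
open scoped ENNReal

/-- The Erdős–Rényi `G(n, 1/n)` measure on edge configurations of `K_n`:
each potential edge is retained (`true`) independently with probability `1/n`. -/
noncomputable def erMeasure (n : ℕ) : Measure (Sym2 (Fin n) → Bool) :=
  Measure.pi fun _ => (PMF.bernoulli (min (n : ℝ≥0∞)⁻¹ 1).toNNReal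
    (by simpa using ENNReal.toNNReal_mono ENNReal.one_ne_top (min_le_right _ _))).toMeasure

instance (n : ℕ) : IsProbabilityMeasure (erMeasure n) := by
  unfold erMeasure; infer_instance

/-- The simple graph on `Fin n` determined by an edge configuration. -/
def graphOf {n : ℕ} (ω : Sym2 (Fin n) → Bool) : SimpleGraph (Fin n) where
  Adj u v := u ≠ v ∧ ω s(u, v) = true
  symm := by
    refine ⟨fun u v h => ?_⟩
    exact ⟨Ne.symm h.1, by rw [Sym2.eq_swap]; exact h.2⟩
  loopless := by
    refine ⟨fun u h => ?_⟩
    exact h.1 rfl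

/-- Size of the connected component of `v`. -/
noncomputable def compSize {n : ℕ} (G : SimpleGraph (Fin n)) (v : Fin n) : ℕ :=
  Nat.card {w : Fin n | G.Reachable v w}

/-- Diameter of a finite graph: maximal distance between two vertices. -/
noncomputable def gdiam {n : ℕ} (G : SimpleGraph (Fin n)) : ℕ :=
  Finset.univ.sup fun p : Fin n × Fin n => G.dist p.1 p.2

open scoped Classical in
/-- Diameter of the connected component of `x`. -/
noncomputable def compDiam {n : ℕ} (G : SimpleGraph (Fin n)) (x : Fin n) : ℕ :=
  Finset.univ.sup fun p : Fin n × Fin n =>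
    if G.Reachable x p.1 ∧ G.Reachable x p.2 then G.dist p.1 p.2 else 0

/-- Product of the weights of the edges of `T`. -/
noncomputable def treeWeight {n : ℕ} (w : Sym2 (Fin n) → ℝ) (T : SimpleGraph (Fin n)) : ℝ :=
  letI : Fintype T.edgeSet := Fintype.ofFinite _
  ∏ e ∈ T.edgeSet.toFinset, w e

open scoped Classical in
/-- Probability that the `w`-weighted uniform spanning tree of `K_n` lies in `E`. -/
noncomputable def ustProb {n : ℕ} (w : Sym2 (Fin n) → ℝ) (E : Set (SimpleGraph (Fin n))) : ℝ :=
  (∑ T ∈ Finset.univ.filter (fun T : SimpleGraph (Fin n) => T.IsTree ∧ T ∈ E), treeWeight w T) /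
    (∑ T ∈ Finset.univ.filter (fun T : SimpleGraph (Fin n) => T.IsTree), treeWeight w T)

/-- The random weights: heavy edges get weight `n^(1+γ)`, the others weight `1`. -/
noncomputable def weightFn (n : ℕ) (γ : ℝ) (ω : Sym2 (Fin n) → Bool) (e : Sym2 (Fin n)) : ℝ :=
  if ω e then (n : ℝ) ^ ((1 : ℝ) + γ) else 1

/-!
If `u` and `v` are connected, some self-avoiding path of `K_n` from `u` to `v` is open. A path of
length `j + 1` is determined by its `j` distinct interior vertices, so the union bound gives
`P(u ↔ v) ≤ n⁻¹ ∑ⱼ t j` with `t j = n (n - 1) ⋯ (n - j + 1) / nʲ`. The sequence `t` is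
submultiplicative, and `t m ≤ exp (-m (m - 1) / 2n) ≤ 1 / 2` for `m = 2 (⌊√n⌋ + 1)`; summing in
blocks of length `m` gives `∑ⱼ t j ≤ 2m`, hence `P(u ↔ v) = O(n^(-1/2))`.
-/

open Finset

lemma sum_range_le_two_mul_of_le_half {t : ℕ → ℝ} {m : ℕ} (ht : ∀ j, t j ≤ 1)
    (hm : ∀ j, t (m + j) ≤ t j / 2) (N : ℕ) : ∑ j ∈ range N, t j ≤ 2 * m := by
  induction N using Nat.strong_induction_on with
  | _ N ih =>
    rcases lt_or_ge N m with hN | hN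
    · calc ∑ j ∈ range N, t j ≤ ∑ _j ∈ range N, (1 : ℝ) := sum_le_sum fun j _ => ht j
        _ ≤ 2 * m := by simp only [sum_const, card_range, nsmul_one]; norm_cast; omega
    · obtain ⟨K, rfl⟩ := Nat.exists_eq_add_of_le hN
      rcases Nat.eq_zero_or_pos m with rfl | hm0
      · simpa using sum_nonpos fun j _ => by linarith [zero_add j ▸ hm j]
      calc ∑ j ∈ range (m + K), t j = ∑ j ∈ range m, t j + ∑ j ∈ range K, t (m + j) :=
            sum_range_add t m K
        _ ≤ ∑ _j ∈ range m, (1 : ℝ) + ∑ j ∈ range K, t j / 2 :=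
            add_le_add (sum_le_sum fun j _ => ht j) (sum_le_sum fun j _ => hm j)
        _ ≤ m + 2 * m / 2 := by
            rw [← sum_div]
            simp only [sum_const, card_range, nsmul_one]
            gcongr
            exact ih K (by omega)
        _ = 2 * m := by ring

lemma Nat.descFactorial_add_le (n m j : ℕ) :
    n.descFactorial (m + j) ≤ n.descFactorial m * n.descFactorial j := by
  rw [← Nat.descFactorial_mul_descFactorial (Nat.le_add_right m j), Nat.add_sub_cancel_left,
    mul_comm]
  exact Nat.mul_le_mul_left _ (Nat.descFactorial_le j (Nat.sub_le n m))

lemma Nat.descFactorial_div_pow_le_exp {n : ℕ} (hn : 0 < n) (m : ℕ) :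
    (n.descFactorial m : ℝ) / n ^ m ≤ Real.exp (-(∑ i ∈ range m, (i : ℝ)) / n) := by
  have hn' : (0 : ℝ) < n := by exact_mod_cast hn
  have hfactor : ∀ i ∈ range m, ((n - i : ℕ) : ℝ) ≤ n * Real.exp (-(i : ℝ) / n) := by
    intro i _
    rcases le_or_gt i n with hin | hin
    · rw [Nat.cast_sub hin, neg_div]
      calc (n : ℝ) - i = n * (1 - i / n) := by field_simp
        _ ≤ n * Real.exp (-(i / n)) := by gcongr; exact Real.one_sub_le_exp_neg _
    · rw [Nat.sub_eq_zero_of_le hin.le, Nat.cast_zero]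
      positivity
  rw [div_le_iff₀ (by positivity), Nat.descFactorial_eq_prod_range, Nat.cast_prod]
  calc ∏ i ∈ range m, ((n - i : ℕ) : ℝ) ≤ ∏ i ∈ range m, (n * Real.exp (-(i : ℝ) / n)) :=
        prod_le_prod (fun _ _ => by positivity) hfactor
    _ = Real.exp (-(∑ i ∈ range m, (i : ℝ)) / n) * n ^ m := by
        rw [prod_mul_distrib, prod_const, card_range, ← Real.exp_sum, ← sum_div,
          sum_neg_distrib, mul_comm]

lemma Nat.descFactorial_div_pow_le_half {n m : ℕ} (hn : 0 < n) (hm : 2 * n ≤ m * (m - 1)) :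
    (n.descFactorial m : ℝ) / n ^ m ≤ 1 / 2 := by
  have hgauss : n ≤ ∑ i ∈ range m, i := by linarith [sum_range_id_mul_two m]
  have hgauss' : (n : ℝ) ≤ ∑ i ∈ range m, (i : ℝ) := by rw [← Nat.cast_sum]; exact_mod_cast hgauss
  have he : 2 ≤ Real.exp 1 := by linarith [Real.add_one_le_exp 1]
  calc (n.descFactorial m : ℝ) / n ^ m ≤ Real.exp (-(∑ i ∈ range m, (i : ℝ)) / n) :=
        Nat.descFactorial_div_pow_le_exp hn m
    _ ≤ Real.exp (-1) := by
        gcongr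
        rw [neg_div, neg_le_neg_iff, one_le_div (by exact_mod_cast hn)]
        exact hgauss'
    _ ≤ 1 / 2 := by
        rw [Real.exp_neg, one_div]
        exact inv_anti₀ (by norm_num) he

lemma sum_descFactorial_div_pow_le {n : ℕ} (hn : 0 < n) (N : ℕ) :
    ∑ j ∈ range N, (n.descFactorial j : ℝ) / n ^ j ≤ 4 * (n.sqrt + 1) := by
  set t : ℕ → ℝ := fun j => (n.descFactorial j : ℝ) / n ^ j
  have ht : ∀ j, t j ≤ 1 := fun j => by
    rw [div_le_one (by positivity)]
    exact_mod_cast Nat.descFactorial_le_pow n j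
  have hm : 2 * n ≤ 2 * (n.sqrt + 1) * (2 * (n.sqrt + 1) - 1) := by
    rw [show 2 * (n.sqrt + 1) - 1 = 2 * n.sqrt + 1 by omega]
    nlinarith [Nat.lt_succ_sqrt n]
  have hshift : ∀ j, t (2 * (n.sqrt + 1) + j) ≤ t j / 2 := fun j =>
    calc t (2 * (n.sqrt + 1) + j) ≤ t (2 * (n.sqrt + 1)) * t j := by
          simp only [t]
          rw [div_mul_div_comm, ← pow_add]
          gcongr
          exact_mod_cast Nat.descFactorial_add_le n _ j
      _ ≤ 1 / 2 * t j := by gcongr; exact Nat.descFactorial_div_pow_le_half hn hm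
      _ = t j / 2 := by ring
  calc ∑ j ∈ range N, t j ≤ 2 * ((2 * (n.sqrt + 1) : ℕ) : ℝ) :=
        sum_range_le_two_mul_of_le_half ht hshift N
    _ = 4 * (n.sqrt + 1) := by push_cast; ring

namespace SimpleGraph

variable {V : Type*} [Fintype V] [DecidableEq V] {G : SimpleGraph V} [DecidableRel G.Adj]

lemma card_path_length_succ_le (u v : V) (j : ℕ) :
    #{P : G.Path u v | P.1.length = j + 1} ≤ (Fintype.card V).descFactorial j := by
  rw [← Fintype.card_subtype]
  let interior : {P : G.Path u v // P.1.length = j + 1} → (Fin j ↪ V) := fun P =>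
    ⟨fun i => P.1.1.getVert (i + 1), fun i i' h => Fin.ext <| by
      have := P.1.2.getVert_injOn (by simp only [Set.mem_ofPred_eq]; omega)
        (by simp only [Set.mem_ofPred_eq]; omega) h
      omega⟩
  refine (Fintype.card_le_of_injective interior fun P Q hPQ => ?_).trans_eq
    (by rw [Fintype.card_embedding_eq, Fintype.card_fin])
  have hlen : P.1.1.length = Q.1.1.length := P.2.trans Q.2.symm
  refine Subtype.ext <| Subtype.ext <| Walk.ext_getVert_le_length hlen fun k hk => ?_
  rcases k with _ | i
  · simp
  · rcases lt_or_eq_of_le (Nat.le_of_succ_le_succ (P.2 ▸ hk)) with hi | rfl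
    · exact DFunLike.congr_fun hPQ ⟨i, hi⟩
    · rw [Walk.getVert_of_length_le _ P.2.le, Walk.getVert_of_length_le _ Q.2.le]

lemma sum_path_pow_length_le {u v : V} (huv : u ≠ v) {x : ℝ} (hx : 0 ≤ x) :
    ∑ P : G.Path u v, x ^ P.1.length ≤
      ∑ j ∈ range (Fintype.card V), ((Fintype.card V).descFactorial j : ℝ) * x ^ (j + 1) := by
  have hpos : ∀ P : G.Path u v, P.1.length ≠ 0 := fun P h => huv (Walk.eq_of_length_eq_zero h)
  rw [← sum_fiberwise_of_maps_to (g := fun P : G.Path u v => P.1.length - 1)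
    (t := range (Fintype.card V)) fun P _ => mem_range.2 (by have := P.2.length_lt; omega)]
  refine sum_le_sum fun j _ => ?_
  calc ∑ P ∈ {P : G.Path u v | P.1.length - 1 = j}, x ^ P.1.length
      = ∑ P ∈ {P : G.Path u v | P.1.length = j + 1}, x ^ (j + 1) := by
        rw [filter_congr (q := fun P : G.Path u v => P.1.length = j + 1) fun P _ => by
          have := hpos P; omega]
        exact sum_congr rfl fun P hP => by rw [(mem_filter.1 hP).2]
    _ = #{P : G.Path u v | P.1.length = j + 1} * x ^ (j + 1) := by rw [sum_const, nsmul_eq_mul]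
    _ ≤ (Fintype.card V).descFactorial j * x ^ (j + 1) := by
        gcongr
        exact_mod_cast card_path_length_succ_le u v j

end SimpleGraph

lemma erMeasure_forall_eq_true (n : ℕ) (s : Finset (Sym2 (Fin n))) :
    erMeasure n {ω | ∀ e ∈ s, ω e = true} = min (n : ℝ≥0∞)⁻¹ 1 ^ #s := by
  have hcyl : {ω : Sym2 (Fin n) → Bool | ∀ e ∈ s, ω e = true} =
      (s : Set _).pi fun _ => {true} := by
    ext ω; simp [Set.mem_pi]
  rw [hcyl, erMeasure, Measure.pi_pi_finset, prod_const,
    PMF.toMeasure_apply_singleton _ _ (measurableSet_singleton _)]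
  exact congrArg (· ^ #s) <|
    ENNReal.coe_toNNReal (ne_top_of_le_ne_top ENNReal.one_ne_top (min_le_right _ _))

lemma setOf_reachable_subset_iUnion_path {n : ℕ} (u v : Fin n) :
    {ω : Sym2 (Fin n) → Bool | (graphOf ω).Reachable u v} ⊆
      ⋃ P : (⊤ : SimpleGraph (Fin n)).Path u v, {ω | ∀ e ∈ P.1.edges.toFinset, ω e = true} := by
  rintro ω ⟨w⟩
  let q := w.toPath
  have hq : ∀ e ∈ q.1.edges, e ∈ (⊤ : SimpleGraph (Fin n)).edgeSet := fun e he =>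
    SimpleGraph.edgeSet_mono le_top (q.1.edges_subset_edgeSet he)
  refine Set.mem_iUnion.2 ⟨⟨q.1.transfer ⊤ hq, q.2.transfer hq⟩, fun e he => ?_⟩
  rw [List.mem_toFinset, SimpleGraph.Walk.edges_transfer] at he
  induction e with
  | h a b => exact ((SimpleGraph.mem_edgeSet _).1 (q.1.edges_subset_edgeSet he)).2

lemma erMeasure_reachable_le {n : ℕ} (u v : Fin n) :
    erMeasure n {ω | (graphOf ω).Reachable u v} ≤
      ∑ P : (⊤ : SimpleGraph (Fin n)).Path u v, (n : ℝ≥0∞)⁻¹ ^ P.1.length :=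
  calc erMeasure n {ω | (graphOf ω).Reachable u v}
      ≤ ∑' P : (⊤ : SimpleGraph (Fin n)).Path u v,
          erMeasure n {ω | ∀ e ∈ P.1.edges.toFinset, ω e = true} :=
        (measure_mono (setOf_reachable_subset_iUnion_path u v)).trans (measure_iUnion_le _)
    _ ≤ ∑ P : (⊤ : SimpleGraph (Fin n)).Path u v, (n : ℝ≥0∞)⁻¹ ^ P.1.length := by
        rw [tsum_fintype]
        refine sum_le_sum fun P _ => ?_
        rw [erMeasure_forall_eq_true, List.toFinset_card_of_nodup P.2.isTrail.edges_nodup,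
          SimpleGraph.Walk.length_edges]
        exact pow_le_pow_left' (min_le_left _ _) _

lemma erMeasure_reachable_toReal_le {n : ℕ} {u v : Fin n} (huv : u ≠ v) :
    (erMeasure n {ω | (graphOf ω).Reachable u v}).toReal ≤ 4 * (n.sqrt + 1) / n := by
  have hn : 0 < n := u.pos
  have hn' : (0 : ℝ) < n := by exact_mod_cast hn
  have hsum : ∑ P : (⊤ : SimpleGraph (Fin n)).Path u v, (n : ℝ)⁻¹ ^ P.1.length ≤
      4 * (n.sqrt + 1) / n :=
    calc ∑ P : (⊤ : SimpleGraph (Fin n)).Path u v, (n : ℝ)⁻¹ ^ P.1.length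
        ≤ ∑ j ∈ range n, (n.descFactorial j : ℝ) * (n : ℝ)⁻¹ ^ (j + 1) := by
          simpa using SimpleGraph.sum_path_pow_length_le huv (inv_nonneg.2 hn'.le)
      _ = (∑ j ∈ range n, (n.descFactorial j : ℝ) / n ^ j) / n := by
          rw [sum_div]
          refine sum_congr rfl fun j _ => ?_
          rw [pow_succ, inv_pow]
          field_simp
      _ ≤ 4 * (n.sqrt + 1) / n := by gcongr; exact sum_descFactorial_div_pow_le hn n
  refine ENNReal.toReal_le_of_le_ofReal (by positivity) ((erMeasure_reachable_le u v).trans ?_)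
  calc ∑ P : (⊤ : SimpleGraph (Fin n)).Path u v, (n : ℝ≥0∞)⁻¹ ^ P.1.length
      = ENNReal.ofReal (∑ P : (⊤ : SimpleGraph (Fin n)).Path u v, (n : ℝ)⁻¹ ^ P.1.length) := by
        rw [ENNReal.ofReal_sum_of_nonneg fun _ _ => by positivity]
        refine sum_congr rfl fun P _ => ?_
        rw [ENNReal.ofReal_pow (by positivity), ENNReal.ofReal_inv_of_pos hn',
          ENNReal.ofReal_natCast]
    _ ≤ ENNReal.ofReal (4 * (n.sqrt + 1) / n) := ENNReal.ofReal_le_ofReal hsum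

lemma Nat.sqrt_add_one_div_le_two_mul_rpow {n : ℕ} (hn : 0 < n) :
    ((n.sqrt : ℝ) + 1) / n ≤ 2 * (n : ℝ) ^ (-(1 : ℝ) / 3) := by
  have hn' : (1 : ℝ) ≤ n := by exact_mod_cast hn
  have hs : (n.sqrt : ℝ) + 1 ≤ 2 * n.sqrt := by
    have := Nat.sqrt_pos.2 hn
    exact_mod_cast (by omega : n.sqrt + 1 ≤ 2 * n.sqrt)
  calc ((n.sqrt : ℝ) + 1) / n ≤ 2 * (Real.sqrt n / n) := by
        rw [mul_div_assoc']
        gcongr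
        exact hs.trans (by gcongr; exact Real.nat_sqrt_le_real_sqrt)
    _ = 2 * (n : ℝ) ^ ((1 : ℝ) / 2 - 1) := by
        rw [Real.sqrt_eq_rpow, Real.rpow_sub_one (by positivity)]
    _ ≤ 2 * (n : ℝ) ^ (-(1 : ℝ) / 3) := by
        gcongr
        norm_num

/-- There is a constant `c > 0` such that for every `n` and any two
distinct vertices `u, v` of `G(n, 1/n)`, the probability that `u` and `v` lie in the same
connected component (i.e. `C(u) = C(v)`, i.e. `u` and `v` are reachable from one another)
is at most `c n^{−1/3}`. -/
theorem same_component_bound :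
    ∃ c > (0 : ℝ), ∀ n : ℕ, ∀ u v : Fin n, u ≠ v →
      (erMeasure n {ω | (graphOf ω).Reachable u v}).toReal ≤ c * (n : ℝ) ^ (-(1 : ℝ) / 3) := by
  refine ⟨8, by norm_num, fun n u v huv => ?_⟩
  calc (erMeasure n {ω | (graphOf ω).Reachable u v}).toReal
      ≤ 4 * (n.sqrt + 1) / n := erMeasure_reachable_toReal_le huv
    _ = 4 * ((n.sqrt + 1) / n) := by ring
    _ ≤ 4 * (2 * (n : ℝ) ^ (-(1 : ℝ) / 3)) := by
        gcongr; exact Nat.sqrt_add_one_div_le_two_mul_rpow u.pos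
    _ = 8 * (n : ℝ) ^ (-(1 : ℝ) / 3) := by ring
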